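/- arXiv:2207.04380 — 9 statements merged into one kernel-verified Lean document; each statement's English description precedes it below -/
import Mathlib

section
/- For probability mass functions P and Q on a countable type Ω and a real number α ≥ 0, the supremum over all subsets S ⊆ Ω of P(S) − α·Q(S) equals ∑_ω max(P(ω) − α·Q(ω), 0), and moreover this quantity equals ∑_{ω : P(ω) > 0} P(ω)·max(1 − α·Q(ω)/P(ω), 0). -/
/-!
Since `P(S) - α·Q(S) = ∑_{ω ∈ S} f ω` with `f = P - α·Q` summable, every such value is at most
the sum of the positive parts of `f`, and `S = {f > 0}` attains this bound. For the second
identity, the positive part of `f ω` vanishes where `P ω = 0` (as `α·Q ω ≥ 0`), and elsewhere it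
equals `P ω · max (1 - α·Q ω / P ω) 0`.
-/
/-- The α-hockey-stick divergence between two PMFs. -/
noncomputable def hsDiv {Ω : Type*} (α : ℝ) (P Q : PMF Ω) : ℝ :=
  ∑' ω, max ((P ω).toReal - α * (Q ω).toReal) 0

section PositivePart

variable {ι : Type*} {f : ι → ℝ}

lemma Summable.max_zero (hf : Summable f) : Summable fun i => max (f i) 0 :=
  hf.abs.of_nonneg_of_le (fun _ => le_max_right _ _)
    fun _ => max_le (le_abs_self _) (abs_nonneg _)

lemma tsum_subtype_le_tsum_max_zero (hf : Summable f) (S : Set ι) :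
    ∑' i : S, f i ≤ ∑' i, max (f i) 0 :=
  calc ∑' i : S, f i ≤ ∑' i : S, max (f i) 0 :=
        (hf.subtype S).tsum_le_tsum (fun _ => le_max_left _ _) (hf.max_zero.subtype S)
    _ ≤ ∑' i, max (f i) 0 :=
        Summable.tsum_subtype_le _ S (fun _ => le_max_right _ _) hf.max_zero

lemma tsum_subtype_pos_eq_tsum_max_zero (f : ι → ℝ) :
    ∑' i : {i | 0 < f i}, f i = ∑' i, max (f i) 0 := by
  have hsupp : Function.support (fun i => max (f i) 0) ⊆ {i | 0 < f i} := fun i hi => by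
    by_contra hneg
    exact hi (max_eq_right (not_lt.mp hneg))
  rw [← tsum_subtype_eq_of_support_subset hsupp]
  exact tsum_congr fun i => (max_eq_left i.2.le).symm

theorem iSup_tsum_subtype_eq_tsum_max_zero (hf : Summable f) :
    ⨆ S : Set ι, ∑' i : S, f i = ∑' i, max (f i) 0 :=
  ciSup_eq_of_forall_le_of_forall_lt_exists_gt (tsum_subtype_le_tsum_max_zero hf)
    fun _ hw => ⟨{i | 0 < f i}, (tsum_subtype_pos_eq_tsum_max_zero f).symm ▸ hw⟩

end PositivePart

lemma mul_max_one_sub_div_zero {p a : ℝ} (hp : 0 < p) :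
    p * max (1 - a / p) 0 = max (p - a) 0 := by
  rw [mul_max_of_nonneg _ _ hp.le, mul_zero, mul_sub, mul_one, mul_div_cancel₀ _ hp.ne']

lemma tsum_max_sub_zero_eq_tsum_pos {ι : Type*} (p q : ι → ℝ) (hq : ∀ i, 0 ≤ q i) :
    ∑' i, max (p i - q i) 0 = ∑' i : {i // 0 < p i}, p i * max (1 - q i / p i) 0 := by
  have hsupp : Function.support (fun i => max (p i - q i) 0) ⊆ {i | 0 < p i} := fun i hi => by
    by_contra hneg
    exact hi (max_eq_right (by linarith [hq i, (not_lt.mp hneg : p i ≤ 0)]))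
  rw [← tsum_subtype_eq_of_support_subset hsupp]
  exact tsum_congr fun i => (mul_max_one_sub_div_zero i.2).symm

lemma PMF.summable_toReal {Ω : Type*} (P : PMF Ω) : Summable fun ω => (P ω).toReal :=
  ENNReal.summable_toReal (P.tsum_coe ▸ ENNReal.one_ne_top)

theorem hockey_stick_sup_eq_tsum_general {Ω : Type*} (P Q : PMF Ω)
    (α : ℝ) (hα : 0 ≤ α) :
    (⨆ S : Set Ω, ((∑' ω : S, (P ω).toReal) - α * ∑' ω : S, (Q ω).toReal))
        = ∑' ω, max ((P ω).toReal - α * (Q ω).toReal) 0 ∧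
    (∑' ω, max ((P ω).toReal - α * (Q ω).toReal) 0)
        = ∑' ω : {ω : Ω // 0 < (P ω).toReal},
            (P ω.1).toReal * max (1 - α * (Q ω.1).toReal / (P ω.1).toReal) 0 := by
  have hsum : Summable fun ω => (P ω).toReal - α * (Q ω).toReal :=
    P.summable_toReal.sub (Q.summable_toReal.mul_left α)
  have hsplit : ∀ S : Set Ω, (∑' ω : S, (P ω).toReal) - α * ∑' ω : S, (Q ω).toReal
      = ∑' ω : S, ((P ω).toReal - α * (Q ω).toReal) := fun S => by
    rw [← tsum_mul_left]
    exact ((P.summable_toReal.subtype S).tsum_sub ((Q.summable_toReal.mul_left α).subtype S)).symm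
  refine ⟨?_, tsum_max_sub_zero_eq_tsum_pos _ _ fun ω => mul_nonneg hα ENNReal.toReal_nonneg⟩
  simp_rw [hsplit]
  exact iSup_tsum_subtype_eq_tsum_max_zero hsum

/-- For PMFs `P, Q` on a countable type and `α ≥ 0`, the supremum over all subsets `S`
of `P(S) - α·Q(S)` equals `∑_ω [P(ω) - α·Q(ω)]₊`, which in turn equals
`∑_{ω : P(ω) > 0} P(ω)·[1 - α·Q(ω)/P(ω)]₊`. -/
theorem hockey_stick_sup_eq_tsum {Ω : Type*} [Countable Ω] (P Q : PMF Ω)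
    (α : ℝ) (hα : 0 ≤ α) :
    (⨆ S : Set Ω, ((∑' ω : S, (P ω).toReal) - α * ∑' ω : S, (Q ω).toReal))
        = ∑' ω, max ((P ω).toReal - α * (Q ω).toReal) 0 ∧
    (∑' ω, max ((P ω).toReal - α * (Q ω).toReal) 0)
        = ∑' ω : {ω : Ω // 0 < (P ω).toReal},
            (P ω.1).toReal * max (1 - α * (Q ω.1).toReal / (P ω.1).toReal) 0 :=
  hockey_stick_sup_eq_tsum_general P Q α hα
end

section
/- Let A, B be PMFs on a countable type Ω, A′, B′ PMFs on a countable type Ω′, P, Q PMFs on a countable type Γ, and P′, Q′ PMFs on a countable type Γ′. If D_α(A‖B) ≤ D_α(P‖Q) for all real α ≥ 0, and D_α(A′‖B′) ≤ D_α(P′‖Q′) for all real α ≥ 0, then D_α(A ⊗ A′ ‖ B ⊗ B′) ≤ D_α(P ⊗ P′ ‖ Q ⊗ Q′) for all real α ≥ 0. -/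
/-!
Since `(X ⊗ A)(θ, ω) = X(θ) A(ω)`, the hockey-stick divergence of a product splits along the first
factor as `D_α(X ⊗ A ‖ Y ⊗ B) = ∑_θ X(θ) · D_{α Y(θ) / X(θ)}(A ‖ B)` (terms with `X(θ) = 0` vanish).
Hence replacing `(A, B)` by a pair dominating it increases every summand; by symmetry the same holds
in the first factor, and changing one factor at a time gives the theorem.
-/

open scoped ENNReal

/-- The product of two PMFs: `(P ⊗ P')(ω, ω') = P(ω) · P'(ω')`. -/
noncomputable def pmfProd {Ω Ω' : Type*} (P : PMF Ω) (P' : PMF Ω') : PMF (Ω × Ω') :=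
  P.bind fun ω => P'.map fun ω' => (ω, ω')

section

variable {Ω Θ Γ : Type*}

@[simp]
lemma pmfProd_apply (P : PMF Ω) (P' : PMF Θ) (ω : Ω) (θ : Θ) :
    pmfProd P P' (ω, θ) = P ω * P' θ := by
  classical
  simp only [pmfProd, PMF.bind_apply, PMF.map_apply, Prod.mk.injEq, ite_and]
  rw [tsum_eq_single ω fun a ha => by simp [Ne.symm ha]]
  simp

/-- The hockey-stick divergence with values in `ℝ≥0∞`, where truncated subtraction plays the role
of `max (· - ·) 0`; all sums then converge. -/
noncomputable def ehsDiv (a : ℝ≥0∞) (P Q : PMF Ω) : ℝ≥0∞ :=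
  ∑' ω, (P ω - a * Q ω)

lemma ehsDiv_le_one (a : ℝ≥0∞) (P Q : PMF Ω) : ehsDiv a P Q ≤ 1 :=
  P.tsum_coe ▸ ENNReal.tsum_le_tsum fun _ => tsub_le_self

lemma ehsDiv_ne_top (a : ℝ≥0∞) (P Q : PMF Ω) : ehsDiv a P Q ≠ ∞ :=
  ne_top_of_le_ne_top ENNReal.one_ne_top (ehsDiv_le_one a P Q)

lemma ENNReal.toReal_tsub_eq_max {a b : ℝ≥0∞} (ha : a ≠ ∞) (hb : b ≠ ∞) :
    (a - b).toReal = max (a.toReal - b.toReal) 0 := by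
  rcases le_total b a with hba | hab
  · rw [ENNReal.toReal_sub_of_le hba ha,
      max_eq_left (sub_nonneg.2 (ENNReal.toReal_mono ha hba))]
  · rw [tsub_eq_zero_of_le hab, max_eq_right (sub_nonpos.2 (ENNReal.toReal_mono hb hab)),
      ENNReal.toReal_zero]

lemma hsDiv_eq_toReal_ehsDiv {α : ℝ} (hα : 0 ≤ α) (P Q : PMF Ω) :
    hsDiv α P Q = (ehsDiv (ENNReal.ofReal α) P Q).toReal := by
  rw [ehsDiv, ENNReal.tsum_toReal_eq fun ω => ne_top_of_le_ne_top (P.apply_ne_top ω) tsub_le_self]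
  refine tsum_congr fun ω => ?_
  rw [ENNReal.toReal_tsub_eq_max (P.apply_ne_top ω)
      (ENNReal.mul_ne_top ENNReal.ofReal_ne_top (Q.apply_ne_top ω)),
    ENNReal.toReal_mul, ENNReal.toReal_ofReal hα]

def IsDominatedBy (A B : PMF Ω) (P Q : PMF Γ) : Prop :=
  ∀ α : ℝ, 0 ≤ α → hsDiv α A B ≤ hsDiv α P Q

lemma isDominatedBy_iff_ehsDiv {A B : PMF Ω} {P Q : PMF Γ} :
    IsDominatedBy A B P Q ↔ ∀ a ≠ ∞, ehsDiv a A B ≤ ehsDiv a P Q := by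
  refine ⟨fun h a ha => ?_, fun h α hα => ?_⟩
  · have hle := h a.toReal ENNReal.toReal_nonneg
    rwa [hsDiv_eq_toReal_ehsDiv ENNReal.toReal_nonneg, hsDiv_eq_toReal_ehsDiv ENNReal.toReal_nonneg,
      ENNReal.ofReal_toReal ha,
      ENNReal.toReal_le_toReal (ehsDiv_ne_top _ _ _) (ehsDiv_ne_top _ _ _)] at hle
  · rw [hsDiv_eq_toReal_ehsDiv hα, hsDiv_eq_toReal_ehsDiv hα,
      ENNReal.toReal_le_toReal (ehsDiv_ne_top _ _ _) (ehsDiv_ne_top _ _ _)]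
    exact h _ ENNReal.ofReal_ne_top

lemma IsDominatedBy.trans {Λ : Type*} {A B : PMF Ω} {P Q : PMF Γ} {R S : PMF Λ}
    (h₁ : IsDominatedBy A B P Q) (h₂ : IsDominatedBy P Q R S) : IsDominatedBy A B R S :=
  fun α hα => (h₁ α hα).trans (h₂ α hα)

lemma IsDominatedBy.tsum_mul_tsub_mul_le {A B : PMF Ω} {P Q : PMF Γ} (h : IsDominatedBy A B P Q)
    {c d : ℝ≥0∞} (hc : c ≠ ∞) (hd : d ≠ ∞) :
    ∑' ω, (c * A ω - d * B ω) ≤ ∑' γ, (c * P γ - d * Q γ) := by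
  rcases eq_or_ne c 0 with rfl | hc0
  · simp
  have hd_eq : d = c * (d / c) := (ENNReal.mul_div_cancel hc0 hc).symm
  have factor : ∀ x y : ℝ≥0∞, c * x - d * y = c * (x - d / c * y) := fun x y => by
    rw [ENNReal.mul_sub fun _ _ => hc, ← mul_assoc, ← hd_eq]
  simp only [factor, ENNReal.tsum_mul_left]
  gcongr
  exact isDominatedBy_iff_ehsDiv.1 h _ (ENNReal.div_ne_top hd hc0)

lemma ehsDiv_pmfProd (a : ℝ≥0∞) (X Y : PMF Θ) (A B : PMF Ω) :
    ehsDiv a (pmfProd X A) (pmfProd Y B) = ∑' θ, ∑' ω, (X θ * A ω - a * Y θ * B ω) := by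
  rw [ehsDiv, ← ENNReal.tsum_prod]
  refine tsum_congr fun ⟨θ, ω⟩ => ?_
  rw [pmfProd_apply, pmfProd_apply, mul_assoc]

lemma ehsDiv_pmfProd_comm (a : ℝ≥0∞) (X Y : PMF Θ) (A B : PMF Ω) :
    ehsDiv a (pmfProd A X) (pmfProd B Y) = ehsDiv a (pmfProd X A) (pmfProd Y B) := by
  rw [ehsDiv_pmfProd, ehsDiv_pmfProd, ENNReal.tsum_comm]
  refine tsum_congr fun θ => tsum_congr fun ω => ?_
  rw [mul_comm (A ω), mul_right_comm a]

lemma IsDominatedBy.pmfProd_left {A B : PMF Ω} {P Q : PMF Γ} (h : IsDominatedBy A B P Q)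
    (X Y : PMF Θ) : IsDominatedBy (pmfProd X A) (pmfProd Y B) (pmfProd X P) (pmfProd Y Q) := by
  refine isDominatedBy_iff_ehsDiv.2 fun a ha => ?_
  rw [ehsDiv_pmfProd, ehsDiv_pmfProd]
  exact ENNReal.tsum_le_tsum fun θ =>
    h.tsum_mul_tsub_mul_le (X.apply_ne_top θ) (ENNReal.mul_ne_top ha (Y.apply_ne_top θ))

lemma IsDominatedBy.pmfProd_right {A B : PMF Ω} {P Q : PMF Γ} (h : IsDominatedBy A B P Q)
    (X Y : PMF Θ) : IsDominatedBy (pmfProd A X) (pmfProd B Y) (pmfProd P X) (pmfProd Q Y) := by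
  refine isDominatedBy_iff_ehsDiv.2 fun a ha => ?_
  rw [ehsDiv_pmfProd_comm a X Y A B, ehsDiv_pmfProd_comm a X Y P Q]
  exact isDominatedBy_iff_ehsDiv.1 (h.pmfProd_left X Y) a ha

end

theorem domination_product_general {Ω Ω' Γ Γ' : Type*}
    (A B : PMF Ω) (A' B' : PMF Ω') (P Q : PMF Γ) (P' Q' : PMF Γ')
    (hdom : ∀ α : ℝ, 0 ≤ α → hsDiv α A B ≤ hsDiv α P Q)
    (hdom' : ∀ α : ℝ, 0 ≤ α → hsDiv α A' B' ≤ hsDiv α P' Q') :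
    ∀ α : ℝ, 0 ≤ α →
      hsDiv α (pmfProd A A') (pmfProd B B') ≤ hsDiv α (pmfProd P P') (pmfProd Q Q') :=
  IsDominatedBy.trans (IsDominatedBy.pmfProd_right hdom A' B')
    (IsDominatedBy.pmfProd_left hdom' P Q)

/-- Domination of pairs of PMFs (in the hockey-stick divergence sense) is preserved
under taking products. -/
theorem domination_product {Ω Ω' Γ Γ' : Type*} [Countable Ω] [Countable Ω']
    [Countable Γ] [Countable Γ']
    (A B : PMF Ω) (A' B' : PMF Ω') (P Q : PMF Γ) (P' Q' : PMF Γ')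
    (hdom : ∀ α : ℝ, 0 ≤ α → hsDiv α A B ≤ hsDiv α P Q)
    (hdom' : ∀ α : ℝ, 0 ≤ α → hsDiv α A' B' ≤ hsDiv α P' Q') :
    ∀ α : ℝ, 0 ≤ α →
      hsDiv α (pmfProd A A') (pmfProd B B') ≤ hsDiv α (pmfProd P P') (pmfProd Q Q') :=
  domination_product_general A B A' B' P Q P' Q' hdom hdom'
end

section
/- Let P, Q be PMFs on a countable type Ω and P′, Q′ be PMFs on a countable type Ω′, where Q(ω) > 0 for all ω ∈ Ω and Q′(ω′) > 0 for all ω′ ∈ Ω′. Then the pushforward of the product PMF P ⊗ P′ under the map (ω, ω′) ↦ log((P(ω)·P′(ω′)) / (Q(ω)·Q′(ω′))) equals the pushforward under the addition map (x, y) ↦ x + y of the product of the two pushforward PMFs: (map of P under ω ↦ log(P(ω)/Q(ω))) ⊗ (map of P′ under ω′ ↦ log(P′(ω′)/Q′(ω′))). In other words, the privacy loss distribution of (P ⊗ P′, Q ⊗ Q′) is the convolution of the privacy loss distributions of (P, Q) and of (P′, Q′). -/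
/-- The privacy loss distribution of a pair `(P, Q)` of PMFs (with `Q` everywhere
positive): the pushforward of `P` under `ω ↦ log(P(ω)/Q(ω))`. -/
noncomputable def PLD {Ω : Type*} (P Q : PMF Ω) : PMF ℝ :=
  P.map fun ω => Real.log ((P ω).toReal / (Q ω).toReal)

/-!
Wherever `P ω` and `P' ω'` are nonzero, `log (P ω P' ω' / (Q ω Q' ω')) = log (P ω / Q ω) + log (P' ω' / Q' ω')`.
A pushforward only sees the support, so the privacy loss of the product may be replaced by the sum
of the two privacy losses, and pushing a product forward under `Prod.map` gives the product of the
pushforwards.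
-/

namespace PMF

variable {α β : Type*}

theorem bind_congr_of_mem_support (p : PMF α) {f g : α → PMF β}
    (h : ∀ a ∈ p.support, f a = g a) : p.bind f = p.bind g := by
  ext b
  simp only [bind_apply]
  refine tsum_congr fun a => ?_
  by_cases ha : a ∈ p.support
  · rw [h a ha]
  · simp [(mem_support_iff p a).not_left.1 ha]

theorem map_congr_of_mem_support (p : PMF α) {f g : α → β}
    (h : ∀ a ∈ p.support, f a = g a) : p.map f = p.map g :=
  p.bind_congr_of_mem_support fun a ha => congrArg pure (h a ha)

theorem toReal_apply_ne_zero (p : PMF α) {a : α} (h : p a ≠ 0) : (p a).toReal ≠ 0 :=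
  ENNReal.toReal_ne_zero.2 ⟨h, p.apply_ne_top a⟩

end PMF

section pmfProd

variable {α β γ δ : Type*}

theorem pmfProd_apply_s3 (P : PMF α) (P' : PMF β) (a : α) (b : β) :
    pmfProd P P' (a, b) = P a * P' b := by
  rw [pmfProd, PMF.bind_apply, tsum_eq_single a]
  · rw [PMF.map_apply, tsum_eq_single b]
    · simp
    · intro b' hb'
      simp [Ne.symm hb']
  · intro a' ha'
    simp [PMF.map_apply, Ne.symm ha']

theorem mem_support_pmfProd {P : PMF α} {P' : PMF β} {a : α} {b : β} :
    (a, b) ∈ (pmfProd P P').support ↔ a ∈ P.support ∧ b ∈ P'.support := by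
  simp only [PMF.mem_support_iff, pmfProd_apply_s3, ne_eq, mul_eq_zero, not_or]

theorem pmfProd_map_map (P : PMF α) (P' : PMF β) (f : α → γ) (g : β → δ) :
    pmfProd (P.map f) (P'.map g) = (pmfProd P P').map (Prod.map f g) := by
  simp only [pmfProd, PMF.bind_map, PMF.map_bind, PMF.map_comp]
  rfl

end pmfProd

theorem pld_product_eq_convolution_general {Ω Ω' : Type*}
    (P Q : PMF Ω) (P' Q' : PMF Ω')
    (hQ : ∀ ω, 0 < Q ω) (hQ' : ∀ ω', 0 < Q' ω') :
    PMF.map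
        (fun p : Ω × Ω' =>
          Real.log (((P p.1).toReal * (P' p.2).toReal) /
            ((Q p.1).toReal * (Q' p.2).toReal)))
        (pmfProd P P')
      = PMF.map (fun xy : ℝ × ℝ => xy.1 + xy.2) (pmfProd (PLD P Q) (PLD P' Q')) := by
  rw [PLD, PLD, pmfProd_map_map, PMF.map_comp]
  refine PMF.map_congr_of_mem_support _ fun ⟨ω, ω'⟩ h => ?_
  obtain ⟨hω, hω'⟩ := mem_support_pmfProd.1 h
  have hPQ := div_ne_zero (P.toReal_apply_ne_zero hω) (Q.toReal_apply_ne_zero (hQ ω).ne')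
  have hPQ' := div_ne_zero (P'.toReal_apply_ne_zero hω') (Q'.toReal_apply_ne_zero (hQ' ω').ne')
  rw [mul_div_mul_comm, Real.log_mul hPQ hPQ']
  rfl

/-- The privacy loss distribution of the product pair `(P ⊗ P', Q ⊗ Q')` is the
convolution of the privacy loss distributions of `(P, Q)` and `(P', Q')`. -/
theorem pld_product_eq_convolution {Ω Ω' : Type*} [Countable Ω] [Countable Ω']
    (P Q : PMF Ω) (P' Q' : PMF Ω')
    (hQ : ∀ ω, 0 < Q ω) (hQ' : ∀ ω', 0 < Q' ω') :
    PMF.map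
        (fun p : Ω × Ω' =>
          Real.log (((P p.1).toReal * (P' p.2).toReal) /
            ((Q p.1).toReal * (Q' p.2).toReal)))
        (pmfProd P P')
      = PMF.map (fun xy : ℝ × ℝ => xy.1 + xy.2) (pmfProd (PLD P Q) (PLD P' Q')) :=
  pld_product_eq_convolution_general P Q P' Q' hQ hQ'
end

section
/- Fix an integer k ≥ 2 and real numbers 0 = a_0 < a_1 < ⋯ < a_{k−1}. Let h_0, h_1, …, h_k be real numbers satisfying: h_0 = 1; h_{i+1} ≤ h_i for all 0 ≤ i ≤ k−1; h_k ≥ 0; h_{k−1} = h_k; h_i ≥ max(1 − a_i, 0) for all 0 ≤ i ≤ k−1; and the convexity condition (h_{i−1} − h_i)/(a_i − a_{i−1}) ≥ (h_i − h_{i+1})/(a_{i+1} − a_i) for all 1 ≤ i ≤ k−2. Define Q_i := (h_{i−1} − h_i)/(a_i − a_{i−1}) − (h_i − h_{i+1})/(a_{i+1} − a_i) for 1 ≤ i ≤ k−2, Q_{k−1} := (h_{k−2} − h_{k−1})/(a_{k−1} − a_{k−2}), Q_k := 0, and Q_0 := 1 − ∑_{i=1}^{k−1} Q_i; define P_0 :=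 0, P_i := a_i·Q_i for 1 ≤ i ≤ k−1, and P_k := h_k. Then: Q_i ≥ 0 for all 0 ≤ i ≤ k, ∑_{i=0}^{k} Q_i = 1, P_i ≥ 0 for all 0 ≤ i ≤ k, and ∑_{i=0}^{k} P_i = 1; that is, (P_i) and (Q_i) are probability vectors. -/
/-!
Write `s i = (h i - h (i + 1)) / (a (i + 1) - a i)` (`negSlope a h i`) for the slopes of the descending polygon
through the points `(a i, h i)`. Then `Q 1, …, Q (k - 1)` are the successive differences
`s (i - 1) - s i`, closed off by `s (k - 2)`, so they are nonnegative by convexity and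
monotonicity and sum to `s 0 = (1 - h 1) / a 1 ≤ 1`; this makes `Q 0 ≥ 0` and `∑ Q = 1`.
For `P`, summation by parts: since `(a (i + 1) - a i) * s i = h i - h (i + 1)`,
`a i * (s (i - 1) - s i) = (a i * s (i - 1) + h i) - (a (i + 1) * s i + h (i + 1))`,
so `∑ P` telescopes to `a 1 * s 0 + h 1 - h (k - 1) + h k = 1`.
-/

open Finset

theorem sum_Icc_one_eq_sum_range {M : Type*} [AddCommMonoid M] (f : ℕ → M) (m : ℕ) :
    ∑ i ∈ Icc 1 m, f i = ∑ i ∈ range m, f (i + 1) := by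
  rw [← Ico_add_one_right_eq_Icc, sum_Ico_eq_sum_range]
  simp only [add_tsub_cancel_right, add_comm 1]

theorem sum_range_add_three {M : Type*} [AddCommMonoid M] (f : ℕ → M) (n : ℕ) :
    ∑ i ∈ range (n + 3), f i = f 0 + ∑ i ∈ range (n + 1), f (i + 1) + f (n + 2) := by
  rw [sum_range_succ, sum_range_succ', add_comm _ (f 0)]

theorem sum_range_succ_eq_of_eq_sub {M : Type*} [AddCommGroup M] {f g : ℕ → M} {n : ℕ}
    (hf : ∀ i < n, f (i + 1) = g i - g (i + 1)) :
    ∑ i ∈ range (n + 1), f (i + 1) = g 0 - g n + f (n + 1) := by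
  rw [sum_range_succ, sum_congr rfl fun i hi => hf i (mem_range.1 hi), sum_range_sub']

def IsProbVector (p : ℕ → ℝ) (m : ℕ) : Prop :=
  (∀ i ≤ m, 0 ≤ p i) ∧ ∑ i ∈ range (m + 1), p i = 1

theorem isProbVector_of_eq_sub {s Q : ℕ → ℝ} {n : ℕ} (hs : ∀ i < n, s (i + 1) ≤ s i)
    (hsn : 0 ≤ s n) (hs0 : s 0 ≤ 1) (hQ : ∀ i < n, Q (i + 1) = s i - s (i + 1))
    (hQlast : Q (n + 1) = s n) (hQ0 : Q 0 = 1 - ∑ i ∈ range (n + 1), Q (i + 1))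
    (hQk : Q (n + 2) = 0) : IsProbVector Q (n + 2) := by
  have hsum : ∑ i ∈ range (n + 1), Q (i + 1) = s 0 := by
    rw [sum_range_succ_eq_of_eq_sub hQ, hQlast, sub_add_cancel]
  refine ⟨?_, by rw [sum_range_add_three, hQ0, hsum, hQk]; ring⟩
  rintro (_ | i) hi
  · rwa [hQ0, hsum, sub_nonneg]
  rcases (by omega : i < n ∨ i = n ∨ i = n + 1) with hi | rfl | rfl
  · rw [hQ i hi, sub_nonneg]
    exact hs i hi
  · rwa [hQlast]
  · exact hQk.ge

noncomputable def negSlope (a h : ℕ → ℝ) (i : ℕ) : ℝ :=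
  (h i - h (i + 1)) / (a (i + 1) - a i)

section negSlope

variable {a h : ℕ → ℝ} {i n : ℕ}

theorem negSlope_mul_sub (hi : a i ≠ a (i + 1)) :
    negSlope a h i * (a (i + 1) - a i) = h i - h (i + 1) :=
  div_mul_cancel₀ _ (sub_ne_zero.2 hi.symm)

theorem negSlope_nonneg (ha : a i < a (i + 1)) (hh : h (i + 1) ≤ h i) : 0 ≤ negSlope a h i :=
  div_nonneg (sub_nonneg.2 hh) (sub_nonneg.2 ha.le)

theorem negSlope_zero_le_one (ha0 : a 0 = 0) (hh0 : h 0 = 1) (ha1 : 0 < a 1)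
    (hh1 : 1 - a 1 ≤ h 1) : negSlope a h 0 ≤ 1 := by
  rw [negSlope, zero_add, ha0, hh0, sub_zero, div_le_one ha1]
  linarith

theorem mul_negSlope_zero (ha0 : a 0 = 0) (hh0 : h 0 = 1) (ha1 : a 0 ≠ a 1) :
    a 1 * negSlope a h 0 = 1 - h 1 := by
  have := negSlope_mul_sub (h := h) ha1
  rwa [zero_add, ha0, hh0, sub_zero, mul_comm] at this

theorem mul_negSlope_sub_negSlope (hi : a (i + 1) ≠ a (i + 2)) :
    a (i + 1) * (negSlope a h i - negSlope a h (i + 1)) =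
      (a (i + 1) * negSlope a h i + h (i + 1)) - (a (i + 2) * negSlope a h (i + 1) + h (i + 2)) := by
  linear_combination negSlope_mul_sub (h := h) hi

theorem sum_range_mul_eq_of_eq_negSlope_sub {Q : ℕ → ℝ}
    (hQ : ∀ i < n, Q (i + 1) = negSlope a h i - negSlope a h (i + 1))
    (hQlast : Q (n + 1) = negSlope a h n) (ha : ∀ i < n, a (i + 1) ≠ a (i + 2)) :
    ∑ i ∈ range (n + 1), a (i + 1) * Q (i + 1) = a 1 * negSlope a h 0 + h 1 - h (n + 1) := by
  rw [sum_range_succ_eq_of_eq_sub (f := fun j => a j * Q j)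
    (g := fun j => a (j + 1) * negSlope a h j + h (j + 1)), hQlast]
  · ring
  · intro i hi
    rw [hQ i hi]
    exact mul_negSlope_sub_negSlope (ha i hi)

theorem isProbVector_of_eq_mul {Q P : ℕ → ℝ} (ha0 : a 0 = 0) (hh0 : h 0 = 1)
    (ha : ∀ i < n + 1, a i < a (i + 1))
    (hQ : ∀ i < n, Q (i + 1) = negSlope a h i - negSlope a h (i + 1))
    (hQlast : Q (n + 1) = negSlope a h n) (hQnn : ∀ i ≤ n + 1, 0 ≤ Q i) (hP0 : P 0 = 0)
    (hP : ∀ i ≤ n, P (i + 1) = a (i + 1) * Q (i + 1)) (hPk : P (n + 2) = h (n + 1))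
    (hhk : 0 ≤ h (n + 1)) : IsProbVector P (n + 2) := by
  have ha_nonneg : ∀ i ≤ n + 1, 0 ≤ a i := fun i hi =>
    ha0 ▸ (strictMonoOn_Iic_of_lt_succ ha).monotoneOn (by simp) hi (Nat.zero_le i)
  refine ⟨?_, ?_⟩
  · rintro (_ | i) hi
    · exact hP0.ge
    rcases (by omega : i ≤ n ∨ i = n + 1) with hi | rfl
    · rw [hP i hi]
      exact mul_nonneg (ha_nonneg _ (by omega)) (hQnn _ (by omega))
    · exact hPk ▸ hhk
  · rw [sum_range_add_three, hP0, hPk, sum_congr rfl fun i hi => hP i (mem_range_succ_iff.1 hi),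
      sum_range_mul_eq_of_eq_negSlope_sub hQ hQlast fun i _ => (ha (i + 1) (by omega)).ne,
      mul_negSlope_zero ha0 hh0 (ha 0 n.succ_pos).ne]
    ring

end negSlope

/-- Correctness of the DiscretizePLD algorithm: given the values `h 0, …, h k` of a
hockey-stick curve at discretization points `0 = a 0 < a 1 < ⋯ < a (k-1)` (with index
`k` playing the role of `+∞`), the vectors `P` and `Q` it constructs are probability
vectors. -/
theorem discretizePLD_prob_vectors {k : ℕ} (hk : 2 ≤ k)
    (a : ℕ → ℝ) (ha0 : a 0 = 0) (hamono : ∀ i, i < k - 1 → a i < a (i + 1))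
    (h : ℕ → ℝ) (hh0 : h 0 = 1)
    (hmono : ∀ i, i ≤ k - 1 → h (i + 1) ≤ h i)
    (hhk : 0 ≤ h k) (hlast : h (k - 1) = h k)
    (hlb : ∀ i, i ≤ k - 1 → max (1 - a i) 0 ≤ h i)
    (hconv : ∀ i, 1 ≤ i → i ≤ k - 2 →
      (h i - h (i + 1)) / (a (i + 1) - a i) ≤ (h (i - 1) - h i) / (a i - a (i - 1)))
    (Q P : ℕ → ℝ)
    (hQmid : ∀ i, 1 ≤ i → i ≤ k - 2 →
      Q i = (h (i - 1) - h i) / (a i - a (i - 1)) - (h i - h (i + 1)) / (a (i + 1) - a i))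
    (hQlast : Q (k - 1) = (h (k - 2) - h (k - 1)) / (a (k - 1) - a (k - 2)))
    (hQk : Q k = 0)
    (hQ0 : Q 0 = 1 - ∑ i ∈ Finset.Icc 1 (k - 1), Q i)
    (hP0 : P 0 = 0)
    (hPmid : ∀ i, 1 ≤ i → i ≤ k - 1 → P i = a i * Q i)
    (hPk : P k = h k) :
    (∀ i, i ≤ k → 0 ≤ Q i) ∧ (∑ i ∈ Finset.range (k + 1), Q i = 1) ∧
    (∀ i, i ≤ k → 0 ≤ P i) ∧ (∑ i ∈ Finset.range (k + 1), P i = 1) := by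
  obtain ⟨n, rfl⟩ : ∃ n, k = n + 2 := ⟨k - 2, by omega⟩
  simp only [show n + 2 - 1 = n + 1 from rfl, show n + 2 - 2 = n from rfl] at *
  have hQs : ∀ i < n, Q (i + 1) = negSlope a h i - negSlope a h (i + 1) := fun i _ =>
    hQmid (i + 1) (by omega) (by omega)
  have hQ : IsProbVector Q (n + 2) :=
    isProbVector_of_eq_sub (fun i _ => hconv (i + 1) (by omega) (by omega))
      (negSlope_nonneg (hamono n (by omega)) (hmono n (by omega)))
      (negSlope_zero_le_one ha0 hh0 (ha0 ▸ hamono 0 (by omega))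
        ((le_max_left _ _).trans (hlb 1 (by omega))))
      hQs hQlast (by rwa [sum_Icc_one_eq_sum_range] at hQ0) hQk
  have hP : IsProbVector P (n + 2) :=
    isProbVector_of_eq_mul ha0 hh0 hamono hQs hQlast (fun i _ => hQ.1 i (by omega)) hP0
      (fun i _ => hPmid (i + 1) (by omega) (by omega)) (hlast ▸ hPk) (hlast ▸ hhk)
  exact and_assoc.1 ⟨hQ, hP⟩
end

section
/- Fix an integer k ≥ 2 and real numbers 0 = a_0 < a_1 < ⋯ < a_{k−1}. Let h_0, …, h_k be real numbers satisfying: h_0 = 1; h_{i+1} ≤ h_i for all 0 ≤ i ≤ k−1; h_k ≥ 0; h_{k−1} = h_k; h_i ≥ max(1 − a_i, 0) for all 0 ≤ i ≤ k−1; and (h_{i−1} − h_i)/(a_i − a_{i−1}) ≥ (h_i − h_{i+1})/(a_{i+1} − a_i) for all 1 ≤ i ≤ k−2. Define Q_i, P_i (0 ≤ i ≤ k) as: Q_i := (h_{i−1} − h_i)/(a_i − a_{i−1}) − (h_i − h_{i+1})/(a_{i+1} − a_i) for 1 ≤ i ≤ k−2, Q_{k−1} := (h_{k−2} − h_{k−1})/(a_{k−1}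 − a_{k−2}), Q_k := 0, Q_0 := 1 − ∑_{i=1}^{k−1} Q_i; P_0 := 0, P_i := a_i·Q_i for 1 ≤ i ≤ k−1, P_k := h_k. Then for every 1 ≤ i ≤ k−1 and every real α with a_{i−1} ≤ α ≤ a_i: ∑_{j=0}^{k−1} max(P_j − α·Q_j, 0) + P_k = ((a_i − α)·h_{i−1} + (α − a_{i−1})·h_i)/(a_i − a_{i−1}); and for every real α ≥ a_{k−1}: ∑_{j=0}^{k−1} max(P_j − α·Q_j, 0) + P_k = h_k. -/
/-!
Let `s j = (h (j-1) - h j) / (a j - a (j-1))` be minus the slope of the `j`-th chord of the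
interpolation; `h (k-1) = h k` makes `s k = 0`. Then `Q j = s j - s (j+1)` for `1 ≤ j ≤ k-1`,
nonnegative by concavity, and `Q 0 = 1 - s 1 ≥ 0` because `h 1 ≥ 1 - a 1`. As `P j = a j * Q j`,
the `j`-th term is `[a j - α]₊ Q j`. For `α` in the `i`-th cell it vanishes for `j < i`, and for
`j ≥ i` it is the drop at `α` from the `j`-th chord line to the `(j+1)`-th, two lines meeting at
`(a j, h j)`. The sum telescopes to the `i`-th chord line at `α`, which is the interpolation,
minus the `k`-th one, which is the constant `h k = P k`.
-/

open Finset

theorem Finset.sum_Ico_sub_succ {M : Type*} [AddCommGroup M] (f : ℕ → M) {m n : ℕ}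
    (hmn : m ≤ n) : ∑ j ∈ Ico m n, (f j - f (j + 1)) = f m - f n := by
  rw [← neg_sub (f n), ← sum_Ico_sub f hmn, ← sum_neg_distrib]
  simp only [neg_sub]

theorem sum_range_max_mul_sub_mul_eq_sub {a Q g : ℕ → ℝ} {α : ℝ} {i k : ℕ} (hik : i ≤ k)
    (hQ : ∀ j < k, 0 ≤ Q j) (hbelow : ∀ j < i, a j ≤ α)
    (habove : ∀ j, i ≤ j → j < k → α ≤ a j)
    (hg : ∀ j, i ≤ j → j < k → g j - g (j + 1) = (a j - α) * Q j) :
    ∑ j ∈ range k, max (a j * Q j - α * Q j) 0 = g i - g k := by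
  rw [← sum_range_add_sum_Ico _ hik, ← sum_Ico_sub_succ g hik]
  have hlow : ∑ j ∈ range i, max (a j * Q j - α * Q j) 0 = 0 :=
    sum_eq_zero fun j hj => by
      have hji := mem_range.1 hj
      have := mul_le_mul_of_nonneg_right (hbelow j hji) (hQ j (by omega))
      exact max_eq_right (by linarith)
  rw [hlow, zero_add]
  refine sum_congr rfl fun j hj => ?_
  obtain ⟨hij, hjk⟩ := mem_Ico.1 hj
  have := mul_le_mul_of_nonneg_right (habove j hij hjk) (hQ j hjk)
  rw [hg j hij hjk, max_eq_left (by linarith)]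
  ring

theorem sum_Icc_one_eq_sub {s Q : ℕ → ℝ} {k : ℕ} (hk : 1 ≤ k)
    (hQs : ∀ j, 1 ≤ j → j < k → Q j = s j - s (j + 1)) :
    ∑ j ∈ Icc 1 (k - 1), Q j = s 1 - s k := by
  rw [← Ico_add_one_right_eq_Icc, Nat.sub_add_cancel hk, ← sum_Ico_sub_succ s hk]
  exact sum_congr rfl fun j hj => hQs j (mem_Ico.1 hj).1 (mem_Ico.1 hj).2

namespace DiscretizePLD

/-- Minus the slope of the chord from `(a (j-1), h (j-1))` to `(a j, h j)`. -/
noncomputable def chordSlope (a h : ℕ → ℝ) (j : ℕ) : ℝ := (h (j - 1) - h j) / (a j - a (j - 1))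

noncomputable def chordLine (a h : ℕ → ℝ) (j : ℕ) (α : ℝ) : ℝ :=
  h j + (a j - α) * chordSlope a h j

variable {a h : ℕ → ℝ}

theorem chordSlope_eq_zero_of_eq {j : ℕ} (hj : h (j - 1) = h j) : chordSlope a h j = 0 := by
  rw [chordSlope, hj, sub_self, zero_div]

theorem chordLine_eq_interpolation {i : ℕ} (α : ℝ) (hi : a (i - 1) ≠ a i) :
    chordLine a h i α
      = ((a i - α) * h (i - 1) + (α - a (i - 1)) * h i) / (a i - a (i - 1)) := by
  have : a i - a (i - 1) ≠ 0 := sub_ne_zero.2 hi.symm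
  rw [chordLine, chordSlope]
  field_simp
  ring

theorem chordLine_sub_chordLine_succ {j : ℕ} (α : ℝ) (hj : a (j + 1) = a j → h (j + 1) = h j) :
    chordLine a h j α - chordLine a h (j + 1) α
      = (a j - α) * (chordSlope a h j - chordSlope a h (j + 1)) := by
  have hdrop : chordSlope a h (j + 1) * (a (j + 1) - a j) = h j - h (j + 1) := by
    rw [chordSlope, Nat.add_sub_cancel]
    exact div_mul_cancel_of_imp fun hz => by rw [hj (sub_eq_zero.1 hz), sub_self]
  unfold chordLine
  linear_combination -hdrop

theorem hockeyStick_eq_chordLine_sub {P Q : ℕ → ℝ} {k : ℕ}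
    (hQ : ∀ j < k, 0 ≤ Q j) (hP : ∀ j < k, P j = a j * Q j)
    (hQs : ∀ j, 1 ≤ j → j < k → Q j = chordSlope a h j - chordSlope a h (j + 1))
    (hflat : ∀ j < k, a (j + 1) = a j → h (j + 1) = h j)
    (i : ℕ) (α : ℝ) (hi : 1 ≤ i) (hik : i ≤ k)
    (hbelow : ∀ j < i, a j ≤ α) (habove : ∀ j, i ≤ j → j < k → α ≤ a j) :
    ∑ j ∈ range k, max (P j - α * Q j) 0 = chordLine a h i α - chordLine a h k α := by
  rw [sum_congr rfl fun j hj => by rw [hP j (mem_range.1 hj)]]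
  refine sum_range_max_mul_sub_mul_eq_sub (g := (chordLine a h · α)) hik hQ hbelow habove
    fun j hij hjk => ?_
  rw [chordLine_sub_chordLine_succ α (hflat j hjk), hQs j (by omega) hjk]

theorem eq_chordSlope_sub_chordSlope_succ {k : ℕ} {Q : ℕ → ℝ} (hlast : h (k - 1) = h k)
    (hQmid : ∀ i, 1 ≤ i → i ≤ k - 2 →
      Q i = (h (i - 1) - h i) / (a i - a (i - 1)) - (h i - h (i + 1)) / (a (i + 1) - a i))
    (hQlast : Q (k - 1) = (h (k - 2) - h (k - 1)) / (a (k - 1) - a (k - 2))) :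
    ∀ j, 1 ≤ j → j < k → Q j = chordSlope a h j - chordSlope a h (j + 1) := by
  intro j hj hjk
  rcases Nat.lt_or_ge j (k - 1) with hjk' | hjk'
  · rw [hQmid j hj (by omega), chordSlope, chordSlope, Nat.add_sub_cancel]
  · obtain rfl : j = k - 1 := by omega
    rw [Nat.sub_add_cancel (by omega), chordSlope_eq_zero_of_eq hlast, sub_zero, hQlast,
      chordSlope, show k - 1 - 1 = k - 2 by omega]

theorem chordSlope_succ_le {k : ℕ} (hamono : ∀ i, i < k - 1 → a i < a (i + 1))
    (hmono : ∀ i, i ≤ k - 1 → h (i + 1) ≤ h i) (hlast : h (k - 1) = h k)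
    (hconv : ∀ i, 1 ≤ i → i ≤ k - 2 →
      (h i - h (i + 1)) / (a (i + 1) - a i) ≤ (h (i - 1) - h i) / (a i - a (i - 1))) :
    ∀ j, 1 ≤ j → j < k → chordSlope a h (j + 1) ≤ chordSlope a h j := by
  intro j hj hjk
  rcases Nat.lt_or_ge j (k - 1) with hjk' | hjk'
  · rw [chordSlope, chordSlope, Nat.add_sub_cancel]
    exact hconv j hj (by omega)
  · obtain rfl : j = k - 1 := by omega
    have hh := hmono (k - 1 - 1) (by omega)
    have ha := hamono (k - 1 - 1) (by omega)
    rw [Nat.sub_add_cancel (by omega)] at hh ha ⊢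
    rw [chordSlope_eq_zero_of_eq hlast, chordSlope]
    exact div_nonneg (by linarith) (by linarith)

theorem chordSlope_one_le_one (ha0 : a 0 = 0) (hh0 : h 0 = 1) (ha1 : 0 < a 1)
    (hlb : 1 - a 1 ≤ h 1) : chordSlope a h 1 ≤ 1 := by
  rw [chordSlope, Nat.sub_self, ha0, hh0, sub_zero, div_le_one ha1]
  linarith

end DiscretizePLD

open DiscretizePLD in
theorem discretizePLD_divergence_general {k : ℕ} (hk : 2 ≤ k)
    (a : ℕ → ℝ) (ha0 : a 0 = 0) (hamono : ∀ i, i < k - 1 → a i < a (i + 1))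
    (h : ℕ → ℝ) (hh0 : h 0 = 1)
    (hmono : ∀ i, i ≤ k - 1 → h (i + 1) ≤ h i)
    (hlast : h (k - 1) = h k)
    (hlb : ∀ i, i ≤ k - 1 → max (1 - a i) 0 ≤ h i)
    (hconv : ∀ i, 1 ≤ i → i ≤ k - 2 →
      (h i - h (i + 1)) / (a (i + 1) - a i) ≤ (h (i - 1) - h i) / (a i - a (i - 1)))
    (Q P : ℕ → ℝ)
    (hQmid : ∀ i, 1 ≤ i → i ≤ k - 2 →
      Q i = (h (i - 1) - h i) / (a i - a (i - 1)) - (h i - h (i + 1)) / (a (i + 1) - a i))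
    (hQlast : Q (k - 1) = (h (k - 2) - h (k - 1)) / (a (k - 1) - a (k - 2)))
    (hQ0 : Q 0 = 1 - ∑ i ∈ Finset.Icc 1 (k - 1), Q i)
    (hP0 : P 0 = 0)
    (hPmid : ∀ i, 1 ≤ i → i ≤ k - 1 → P i = a i * Q i)
    (hPk : P k = h k) :
    (∀ i, 1 ≤ i → i ≤ k - 1 → ∀ α : ℝ, a (i - 1) ≤ α → α ≤ a i →
      (∑ j ∈ Finset.range k, max (P j - α * Q j) 0) + P k
        = ((a i - α) * h (i - 1) + (α - a (i - 1)) * h i) / (a i - a (i - 1))) ∧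
    (∀ α : ℝ, a (k - 1) ≤ α →
      (∑ j ∈ Finset.range k, max (P j - α * Q j) 0) + P k = h k) := by
  have ha : MonotoneOn a (Set.Iic (k - 1)) :=
    (strictMonoOn_Iic_of_lt_succ fun m hm => by simpa using hamono m hm).monotoneOn
  have hQs := eq_chordSlope_sub_chordSlope_succ hlast hQmid hQlast
  have hQ : ∀ j < k, 0 ≤ Q j := by
    rintro (_ | j) hj
    · have hs1 := chordSlope_one_le_one ha0 hh0 (ha0 ▸ hamono 0 (by omega))
        (max_le_iff.1 (hlb 1 (by omega))).1
      rw [hQ0, sum_Icc_one_eq_sub (by omega) hQs, chordSlope_eq_zero_of_eq hlast]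
      linarith
    · rw [hQs _ (by omega) hj]
      exact sub_nonneg.2 (chordSlope_succ_le hamono hmono hlast hconv _ (by omega) hj)
  have hP : ∀ j < k, P j = a j * Q j := by
    rintro (_ | j) hj
    · rw [hP0, ha0, zero_mul]
    · exact hPmid _ (by omega) (by omega)
  have hflat : ∀ j < k, a (j + 1) = a j → h (j + 1) = h j := fun j hjk hj => by
    obtain hjk' | rfl : j < k - 1 ∨ j = k - 1 := by omega
    · exact absurd hj (hamono j hjk').ne'
    · rw [Nat.sub_add_cancel (by omega), hlast]
  have hsum := hockeyStick_eq_chordLine_sub hQ hP hQs hflat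
  have hk' : chordLine a h k = fun _ => h k := by
    ext α; rw [chordLine, chordSlope_eq_zero_of_eq hlast, mul_zero, add_zero]
  refine ⟨fun i hi hik α hα hα' => ?_, fun α hα => ?_⟩
  · have hcell : a (i - 1) < a i := by
      simpa [Nat.sub_add_cancel hi] using hamono (i - 1) (by omega)
    rw [hsum i α hi (by omega)
        (fun j hj => (ha (by simp; omega) (by simp; omega) (by omega)).trans hα)
        (fun j hij hjk => hα'.trans (ha (by simp; omega) (by simp; omega) hij)),
      hk', hPk, sub_add_cancel, chordLine_eq_interpolation α hcell.ne]
  · rw [hsum k α (by omega) le_rfl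
        (fun j hj => (ha (by simp; omega) (by simp) (by omega)).trans hα) (fun j _ hjk => by omega),
      hk', hPk, sub_add_cancel]

/-- Divergence-correctness of the DiscretizePLD algorithm: the pair of finitely
supported distributions `(P, Q)` it constructs has hockey-stick divergence
`∑_{j<k} [P j - α·Q j]₊ + P k` equal to the piecewise-linear interpolation of the
input values `h 0, …, h (k-1)` on the grid, and equal to `h k` beyond the last finite
grid point. -/
theorem discretizePLD_divergence {k : ℕ} (hk : 2 ≤ k)
    (a : ℕ → ℝ) (ha0 : a 0 = 0) (hamono : ∀ i, i < k - 1 → a i < a (i + 1))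
    (h : ℕ → ℝ) (hh0 : h 0 = 1)
    (hmono : ∀ i, i ≤ k - 1 → h (i + 1) ≤ h i)
    (hhk : 0 ≤ h k) (hlast : h (k - 1) = h k)
    (hlb : ∀ i, i ≤ k - 1 → max (1 - a i) 0 ≤ h i)
    (hconv : ∀ i, 1 ≤ i → i ≤ k - 2 →
      (h i - h (i + 1)) / (a (i + 1) - a i) ≤ (h (i - 1) - h i) / (a i - a (i - 1)))
    (Q P : ℕ → ℝ)
    (hQmid : ∀ i, 1 ≤ i → i ≤ k - 2 →
      Q i = (h (i - 1) - h i) / (a i - a (i - 1)) - (h i - h (i + 1)) / (a (i + 1) - a i))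
    (hQlast : Q (k - 1) = (h (k - 2) - h (k - 1)) / (a (k - 1) - a (k - 2)))
    (hQk : Q k = 0)
    (hQ0 : Q 0 = 1 - ∑ i ∈ Finset.Icc 1 (k - 1), Q i)
    (hP0 : P 0 = 0)
    (hPmid : ∀ i, 1 ≤ i → i ≤ k - 1 → P i = a i * Q i)
    (hPk : P k = h k) :
    (∀ i, 1 ≤ i → i ≤ k - 1 → ∀ α : ℝ, a (i - 1) ≤ α → α ≤ a i →
      (∑ j ∈ Finset.range k, max (P j - α * Q j) 0) + P k
        = ((a i - α) * h (i - 1) + (α - a (i - 1)) * h i) / (a i - a (i - 1))) ∧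
    (∀ α : ℝ, a (k - 1) ≤ α →
      (∑ j ∈ Finset.range k, max (P j - α * Q j) 0) + P k = h k) :=
  discretizePLD_divergence_general hk a ha0 hamono h hh0 hmono hlast hlb hconv Q P hQmid hQlast hQ0
    hP0 hPmid hPk
end

section
/- Fix an integer k ≥ 2 and real numbers 0 = a_0 < a_1 < ⋯ < a_{k−1}. Let P, Q be PMFs on a countable type Ω such that for every ω with P(ω) > 0, either Q(ω) = 0 or there exists i ∈ {1, …, k−1} with P(ω) = a_i·Q(ω). Then for every i ∈ {1, …, k−1} and every real α with a_{i−1} ≤ α ≤ a_i: D_α(P‖Q) = ((a_i − α)·D_{a_{i−1}}(P‖Q) + (α − a_{i−1})·D_{a_i}(P‖Q))/(a_i − a_{i−1}); that is, the hockey-stick curve of (P, Q) is affine on each interval [a_{i−1}, a_i]. -/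
/-!
For fixed `p, q ≥ 0` the map `c ↦ max (p - c q) 0` is piecewise linear with a single kink at the
likelihood ratio `c = p / q`. On an interval `[β, γ]` containing no likelihood ratio in its
interior, every summand of `hsDiv c P Q` is therefore affine in `c`, and so is the sum. For a grid
interval `[a (i-1), a i]` the hypothesis puts every ratio outside `(a (i-1), a i)`; points with
`P ω = 0` have ratio `0 = a 0 ≤ a (i-1)`.
-/

open Set

theorem max_sub_mul_affine_of_ratio_notMem_Ioo {p q r β γ α : ℝ} (hq : 0 ≤ q)
    (hp : p = r * q) (hr : r ≤ β ∨ γ ≤ r) (hα : α ∈ Icc β γ) :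
    (γ - β) * max (p - α * q) 0
      = (γ - α) * max (p - β * q) 0 + (α - β) * max (p - γ * q) 0 := by
  subst hp
  obtain ⟨hβα, hαγ⟩ := hα
  rcases hr with hr | hr
  · have hzero : ∀ c, r ≤ c → max (r * q - c * q) 0 = 0 := fun c hc =>
      max_eq_right (by nlinarith)
    rw [hzero α (by linarith), hzero β hr, hzero γ (by linarith)]
    ring
  · have hlin : ∀ c, c ≤ r → max (r * q - c * q) 0 = (r - c) * q := fun c hc => by
      rw [max_eq_left (by nlinarith)]
      ring
    rw [hlin α (by linarith), hlin β (by linarith), hlin γ hr]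
    ring

theorem summable_max_sub_mul_toReal {Ω : Type*} (P Q : PMF Ω) (c : ℝ) :
    Summable fun ω => max ((P ω).toReal - c * (Q ω).toReal) 0 := by
  have hsum : ∀ R : PMF Ω, Summable fun ω => (R ω).toReal := fun R =>
    ENNReal.summable_toReal (by simp [R.tsum_coe])
  refine Summable.of_nonneg_of_le (fun ω => le_max_right _ _) (fun ω => ?_)
    ((hsum P).add ((hsum Q).mul_left |c|))
  have hq : 0 ≤ (Q ω).toReal := ENNReal.toReal_nonneg
  have hcq : -(c * (Q ω).toReal) ≤ |c| * (Q ω).toReal := by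
    rw [← neg_mul]
    exact mul_le_mul_of_nonneg_right (neg_le_abs c) hq
  exact max_le (by linarith) (by positivity)

theorem hsDiv_affine_of_ratio_notMem_Ioo {Ω : Type*} {P Q : PMF Ω} {β γ α : ℝ} (hβγ : β < γ)
    (hα : α ∈ Icc β γ)
    (hratio : ∀ ω, Q ω = 0 ∨
      ∃ r, (P ω).toReal = r * (Q ω).toReal ∧ (r ≤ β ∨ γ ≤ r)) :
    hsDiv α P Q = ((γ - α) * hsDiv β P Q + (α - β) * hsDiv γ P Q) / (γ - β) := by
  have hpointwise : ∀ ω, (γ - β) * max ((P ω).toReal - α * (Q ω).toReal) 0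
      = (γ - α) * max ((P ω).toReal - β * (Q ω).toReal) 0
        + (α - β) * max ((P ω).toReal - γ * (Q ω).toReal) 0 := by
    intro ω
    rcases hratio ω with hQ | ⟨r, hp, hr⟩
    · simp only [hQ, ENNReal.toReal_zero, mul_zero, sub_zero]
      ring
    · exact max_sub_mul_affine_of_ratio_notMem_Ioo ENNReal.toReal_nonneg hp hr hα
  have hsum : (γ - β) * hsDiv α P Q = (γ - α) * hsDiv β P Q + (α - β) * hsDiv γ P Q := by
    simp only [hsDiv]
    rw [← tsum_mul_left, ← tsum_mul_left, ← tsum_mul_left,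
      ← ((summable_max_sub_mul_toReal P Q β).mul_left _).tsum_add
        ((summable_max_sub_mul_toReal P Q γ).mul_left _)]
    exact tsum_congr hpointwise
  rw [eq_div_iff (sub_ne_zero.mpr hβγ.ne'), mul_comm, hsum]

theorem hockey_stick_affine_on_grid_general {Ω : Type*} {k : ℕ}
    (a : ℕ → ℝ) (ha0 : a 0 = 0) (hamono : ∀ i, i < k - 1 → a i < a (i + 1))
    (P Q : PMF Ω)
    (hsupp : ∀ ω, 0 < P ω →
      Q ω = 0 ∨ ∃ i, 1 ≤ i ∧ i ≤ k - 1 ∧ (P ω).toReal = a i * (Q ω).toReal)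
    (i : ℕ) (hi1 : 1 ≤ i) (hik : i ≤ k - 1)
    (α : ℝ) (hα1 : a (i - 1) ≤ α) (hα2 : α ≤ a i) :
    hsDiv α P Q
      = ((a i - α) * hsDiv (a (i - 1)) P Q + (α - a (i - 1)) * hsDiv (a i) P Q)
          / (a i - a (i - 1)) := by
  have hmono : MonotoneOn a (Iic (k - 1)) :=
    (strictMonoOn_Iic_of_lt_succ fun m hm => by simpa using hamono m hm).monotoneOn
  have hle : ∀ {m n}, m ≤ n → n ≤ k - 1 → a m ≤ a n := fun hmn hn =>
    hmono (mem_Iic.mpr (hmn.trans hn)) (mem_Iic.mpr hn) hmn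
  have hgap : a (i - 1) < a i := by
    simpa [Nat.sub_add_cancel hi1] using hamono (i - 1) (by omega)
  refine hsDiv_affine_of_ratio_notMem_Ioo hgap ⟨hα1, hα2⟩ fun ω => ?_
  rcases eq_zero_or_pos (P ω) with hP | hP
  · refine Or.inr ⟨0, by simp [hP], Or.inl ?_⟩
    simpa [ha0] using hle (Nat.zero_le (i - 1)) (by omega)
  rcases hsupp ω hP with hQ | ⟨j, -, hjk, hp⟩
  · exact Or.inl hQ
  refine Or.inr ⟨a j, hp, ?_⟩
  rcases Nat.lt_or_ge j i with hji | hij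
  · exact Or.inl (hle (by omega) (by omega))
  · exact Or.inr (hle hij hjk)

/-- If the privacy loss distribution of `(P, Q)` is supported on the grid
`{a 1, …, a (k-1)} ∪ {+∞}`, then the hockey-stick curve of `(P, Q)` is affine on each
grid interval `[a (i-1), a i]`. -/
theorem hockey_stick_affine_on_grid {Ω : Type*} [Countable Ω] {k : ℕ} (hk : 2 ≤ k)
    (a : ℕ → ℝ) (ha0 : a 0 = 0) (hamono : ∀ i, i < k - 1 → a i < a (i + 1))
    (P Q : PMF Ω)
    (hsupp : ∀ ω, 0 < P ω →
      Q ω = 0 ∨ ∃ i, 1 ≤ i ∧ i ≤ k - 1 ∧ (P ω).toReal = a i * (Q ω).toReal)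
    (i : ℕ) (hi1 : 1 ≤ i) (hik : i ≤ k - 1)
    (α : ℝ) (hα1 : a (i - 1) ≤ α) (hα2 : α ≤ a i) :
    hsDiv α P Q
      = ((a i - α) * hsDiv (a (i - 1)) P Q + (α - a (i - 1)) * hsDiv (a i) P Q)
          / (a i - a (i - 1)) :=
  hockey_stick_affine_on_grid_general a ha0 hamono P Q hsupp i hi1 hik α hα1 hα2
end

section
/- Let ε > 0 be a real number and let A, B be the PMFs on Bool given by A(false) = B(true) = e^ε/(e^ε + 1) and A(true) = B(false) = 1/(e^ε + 1). Let γ be a real number with 0 < γ < min(e^ε − e^{−ε}, e^{−ε}), and set a_1 := e^{−ε} − γ and a_2 := e^{−ε} + γ. Then for any PMFs P, Q on a countable type Ω such that (a) for every ω with P(ω) > 0, either Q(ω) = 0 or P(ω) = a_1·Q(ω) or P(ω) = a_2·Q(ω), and (b) D_α(P‖Q) ≤ D_α(A‖B) for all real α ≥ 0, it must hold that D_{a_1}(P‖Q) < 1 − a_1 or D_{a_2}(P‖Q) < (e^ε − a_2)/(e^ε + 1). (Here 1 − a_1 = D_{a_1}(A‖B) and (e^ε − a_2)/(e^ε + 1)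 = D_{a_2}(A‖B), so no optimistic estimate with privacy loss distribution supported on {a_1, a_2, +∞} can match the true curve at both a_1 and a_2; consequently there is no 'best' optimistic estimate.) -/
lemma summable_max_toReal_sub_mul {Ω : Type*} (P Q : PMF Ω) (α : ℝ) :
    Summable fun ω => max ((P ω).toReal - α * (Q ω).toReal) 0 := by
  refine (P.summable_toReal.add (Q.summable_toReal.mul_left |α|)).of_nonneg_of_le
    (fun _ => le_max_right _ _) fun ω => max_le ?_ (by positivity)
  have : -α * (Q ω).toReal ≤ |α| * (Q ω).toReal :=
    mul_le_mul_of_nonneg_right (neg_le_abs α) ENNReal.toReal_nonneg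
  linarith

lemma max_sub_mul_add_max_sub_mul {p q a b : ℝ} (hq : 0 ≤ q) (hab : a ≤ b)
    (h : p ≤ a * q ∨ b * q ≤ p) :
    max (p - a * q) 0 + max (p - b * q) 0 = 2 * max (p - (a + b) / 2 * q) 0 := by
  rcases h with h | h
  · rw [max_eq_right (by linarith), max_eq_right (by nlinarith), max_eq_right (by nlinarith)]
    ring
  · rw [max_eq_left (by nlinarith), max_eq_left (by linarith), max_eq_left (by nlinarith)]
    ring

lemma hsDiv_add_hsDiv_eq_two_mul_hsDiv_midpoint {Ω : Type*} {a b : ℝ} (hab : a ≤ b)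
    (P Q : PMF Ω)
    (h : ∀ ω, (P ω).toReal ≤ a * (Q ω).toReal ∨ b * (Q ω).toReal ≤ (P ω).toReal) :
    hsDiv a P Q + hsDiv b P Q = 2 * hsDiv ((a + b) / 2) P Q := by
  unfold hsDiv
  rw [← (summable_max_toReal_sub_mul P Q a).tsum_add (summable_max_toReal_sub_mul P Q b),
    ← tsum_mul_left]
  exact tsum_congr fun ω => max_sub_mul_add_max_sub_mul ENNReal.toReal_nonneg hab (h ω)

lemma hsDiv_randomizedResponse {E α : ℝ} (hE : 0 < E) (A B : PMF Bool)
    (hAf : (A false).toReal = E / (E + 1)) (hAt : (A true).toReal = 1 / (E + 1))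
    (hBt : (B true).toReal = E / (E + 1)) (hBf : (B false).toReal = 1 / (E + 1))
    (hαl : E⁻¹ ≤ α) (hαu : α ≤ E) :
    hsDiv α A B = (E - α) / (E + 1) := by
  have hE1 : 0 < E + 1 := by linarith
  have hαE : 1 ≤ α * E := by rw [inv_le_iff_one_le_mul₀ hE] at hαl; linarith
  have hfalse : E / (E + 1) - α * (1 / (E + 1)) = (E - α) / (E + 1) := by ring
  have htrue : 1 / (E + 1) - α * (E / (E + 1)) = (1 - α * E) / (E + 1) := by ring
  rw [hsDiv, tsum_bool, hAf, hAt, hBf, hBt, hfalse, htrue,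
    max_eq_left (div_nonneg (by linarith) hE1.le),
    max_eq_right (div_nonpos_of_nonpos_of_nonneg (by linarith) hE1.le), add_zero]

theorem no_best_optimistic_estimate_general {Ω : Type*}
    (ε : ℝ)
    (A B : PMF Bool)
    (hAf : (A false).toReal = Real.exp ε / (Real.exp ε + 1))
    (hAt : (A true).toReal = 1 / (Real.exp ε + 1))
    (hBt : (B true).toReal = Real.exp ε / (Real.exp ε + 1))
    (hBf : (B false).toReal = 1 / (Real.exp ε + 1))
    (γ : ℝ) (hγ0 : 0 < γ)
    (hγ : γ < min (Real.exp ε - Real.exp (-ε)) (Real.exp (-ε)))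
    (a₁ a₂ : ℝ) (ha₁ : a₁ = Real.exp (-ε) - γ) (ha₂ : a₂ = Real.exp (-ε) + γ)
    (P Q : PMF Ω)
    (hsupp : ∀ ω, 0 < P ω →
      Q ω = 0 ∨ (P ω).toReal = a₁ * (Q ω).toReal ∨ (P ω).toReal = a₂ * (Q ω).toReal)
    (hdom : ∀ α : ℝ, 0 ≤ α → hsDiv α P Q ≤ hsDiv α A B) :
    hsDiv a₁ P Q < 1 - a₁ ∨ hsDiv a₂ P Q < (Real.exp ε - a₂) / (Real.exp ε + 1) := by
  by_contra! ⟨h₁, h₂⟩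
  set E := Real.exp ε
  have hE : 0 < E := Real.exp_pos ε
  have hm : Real.exp (-ε) = E⁻¹ := Real.exp_neg ε
  obtain ⟨hγE, hγm⟩ := lt_min_iff.mp hγ
  have hmid : (a₁ + a₂) / 2 = E⁻¹ := by rw [ha₁, ha₂, hm]; ring
  have houtside : ∀ ω,
      (P ω).toReal ≤ a₁ * (Q ω).toReal ∨ a₂ * (Q ω).toReal ≤ (P ω).toReal := by
    intro ω
    have hQ₀ : 0 ≤ (Q ω).toReal := ENNReal.toReal_nonneg
    rcases eq_zero_or_pos (P ω) with hP | hP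
    · left
      rw [hP, ENNReal.toReal_zero]
      exact mul_nonneg (by linarith) hQ₀
    rcases hsupp ω hP with hQ | h | h
    · exact .inr (by simp [hQ])
    · exact .inl h.le
    · exact .inr h.ge
  have hlin := hsDiv_add_hsDiv_eq_two_mul_hsDiv_midpoint (by linarith) P Q houtside
  have hAB := hsDiv_randomizedResponse hE A B hAf hAt hBt hBf le_rfl (by linarith)
  have hdomMid := hdom E⁻¹ (by positivity)
  rw [hmid] at hlin
  have hgap :
      2 * ((E - E⁻¹) / (E + 1)) + γ * E / (E + 1) = (1 - a₁) + (E - a₂) / (E + 1) := by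
    rw [ha₁, ha₂, hm]; field_simp; ring
  have : 0 < γ * E / (E + 1) := by positivity
  linarith

/-- No best optimistic estimate: for the `ε`-DP binary randomized response pair
`(A, B)` and discretization points `a₁ = e^{-ε} - γ`, `a₂ = e^{-ε} + γ`, no pair
`(P, Q)` dominated by `(A, B)` whose privacy loss distribution is supported on
`{a₁, a₂, +∞}` can match the hockey-stick curve of `(A, B)` at both `a₁` and `a₂`. -/
theorem no_best_optimistic_estimate {Ω : Type*} [Countable Ω]
    (ε : ℝ) (hε : 0 < ε)
    (A B : PMF Bool)
    (hAf : (A false).toReal = Real.exp ε / (Real.exp ε + 1))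
    (hAt : (A true).toReal = 1 / (Real.exp ε + 1))
    (hBt : (B true).toReal = Real.exp ε / (Real.exp ε + 1))
    (hBf : (B false).toReal = 1 / (Real.exp ε + 1))
    (γ : ℝ) (hγ0 : 0 < γ)
    (hγ : γ < min (Real.exp ε - Real.exp (-ε)) (Real.exp (-ε)))
    (a₁ a₂ : ℝ) (ha₁ : a₁ = Real.exp (-ε) - γ) (ha₂ : a₂ = Real.exp (-ε) + γ)
    (P Q : PMF Ω)
    (hsupp : ∀ ω, 0 < P ω →
      Q ω = 0 ∨ (P ω).toReal = a₁ * (Q ω).toReal ∨ (P ω).toReal = a₂ * (Q ω).toReal)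
    (hdom : ∀ α : ℝ, 0 ≤ α → hsDiv α P Q ≤ hsDiv α A B) :
    hsDiv a₁ P Q < 1 - a₁ ∨ hsDiv a₂ P Q < (Real.exp ε - a₂) / (Real.exp ε + 1) :=
  no_best_optimistic_estimate_general ε A B hAf hAt hBt hBf γ hγ0 hγ a₁ a₂ ha₁ ha₂ P Q hsupp hdom
end

section
/- Let h : ℝ → ℝ be convex on [0, ∞) and differentiable on [0, ∞), and let a, b be real numbers with 0 ≤ a < b. Let f_a, f_b be real numbers with f_a ≤ h(a) and f_b ≤ h(a) + (b − a)·h′(a). Then for every real α with a ≤ α ≤ b: ((b − α)·f_a + (α − a)·f_b)/(b − a) ≤ h(α). -/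
theorem ConvexOn.add_mul_le_of_hasDerivWithinAt {S : Set ℝ} {f : ℝ → ℝ} {x y f' : ℝ}
    (hfc : ConvexOn ℝ S f) (hx : x ∈ S) (hy : y ∈ S) (hxy : x ≤ y)
    (hf' : HasDerivWithinAt f f' S x) :
    f x + (y - x) * f' ≤ f y := by
  rcases hxy.eq_or_lt with rfl | hlt
  · simp
  have hslope := hfc.le_slope_of_hasDerivWithinAt hx hy hlt hf'
  rw [slope_def_field, le_div_iff₀ (sub_pos.2 hlt)] at hslope
  linarith

/-- Case III of the correctness of the optimistic PLD construction: a segment whose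
left endpoint lies below `h a` and whose right endpoint lies below the tangent line
to `h` at `a` (evaluated at `b`) stays below `h` on `[a, b]`. -/
theorem segment_below_forward_tangent (h h' : ℝ → ℝ)
    (hconv : ConvexOn ℝ (Set.Ici (0 : ℝ)) h)
    (hderiv : ∀ x ∈ Set.Ici (0 : ℝ), HasDerivWithinAt h (h' x) (Set.Ici 0) x)
    (a b : ℝ) (ha : 0 ≤ a) (hab : a < b)
    (fa fb : ℝ) (hfa : fa ≤ h a) (hfb : fb ≤ h a + (b - a) * h' a) :
    ∀ α : ℝ, a ≤ α → α ≤ b → ((b - α) * fa + (α - a) * fb) / (b - a) ≤ h α := by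
  intro α hαa hαb
  have hα : α ∈ Set.Ici (0 : ℝ) := ha.trans hαa
  calc ((b - α) * fa + (α - a) * fb) / (b - a)
      ≤ ((b - α) * h a + (α - a) * (h a + (b - a) * h' a)) / (b - a) := by
        gcongr
    _ = h a + (α - a) * h' a := by
        field_simp [(sub_pos.2 hab).ne']
        ring
    _ ≤ h α := hconv.add_mul_le_of_hasDerivWithinAt ha hα hαa (hderiv a ha)
end

section
/- Fix an integer k ≥ 2, real numbers 0 = a_0 < a_1 < ⋯ < a_{k−1}, and an index i* ∈ {1, …, k−1} with a_{i*} = 1. Let h : ℝ → ℝ be convex on [0, ∞), differentiable on [0, ∞), non-increasing on [0, ∞), with h(0) = 1 and h(α) ≥ max(1 − α, 0) for all α ≥ 0. Let g : ℝ → ℝ be a function that is affine on each grid interval, i.e., for every i ∈ {0, …, k−2} and every α ∈ [a_i, a_{i+1}], g(α) = ((a_{i+1} − α)·g(a_i) + (α − a_i)·g(a_{i+1}))/(a_{i+1} − a_i). Suppose that: g(a_0) ≤ 1; g(a_i) ≤ h(a_{i−1}) + (a_i − a_{i−1})·h′(a_{i−1}) for every i ∈ {1, …, i*}; g(a_i)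 ≤ h(a_{i+1}) − (a_{i+1} − a_i)·h′(a_{i+1}) for every i ∈ {i*, …, k−2}; and g(a_{k−1}) ≤ 0. Then g(α) ≤ h(α) for every real α with 0 ≤ α ≤ a_{k−1}. -/
/-!
On each grid interval `[a n, a (n + 1)]` the function `g` is a chord, so it suffices to find one
tangent line of `h` lying above both of its endpoint values: by convexity that tangent line lies
below `h`. Left of `a i*` the tangent at the left endpoint `a n` works, right of it the
tangent at the right endpoint `a (n + 1)`; in both cases one endpoint is covered by a candidate
inequality and the other by `g ≤ h` at grid points, which itself follows from the candidates
(again through tangent lines), from `h 0 = 1` and from `h ≥ 0`.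
-/

theorem ConvexOn.add_sub_mul_le_of_hasDerivWithinAt {S : Set ℝ} {f : ℝ → ℝ} {f' x y : ℝ}
    (hf : ConvexOn ℝ S f) (hx : x ∈ S) (hy : y ∈ S) (hf' : HasDerivWithinAt f f' S x) :
    f x + (y - x) * f' ≤ f y := by
  rcases lt_trichotomy x y with hxy | rfl | hxy
  · have hslope := hf.le_slope_of_hasDerivWithinAt hx hy hxy hf'
    rw [slope_def_field, le_div_iff₀ (sub_pos.2 hxy)] at hslope
    linarith
  · simp
  · have hslope := hf.slope_le_of_hasDerivWithinAt hy hx hxy hf'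
    rw [slope_def_field, div_le_iff₀ (sub_pos.2 hxy)] at hslope
    linarith

theorem chord_le_of_le_line {x y t gx gy p b m : ℝ} (hxy : x < y) (hxt : x ≤ t) (hty : t ≤ y)
    (hx : gx ≤ b + (x - p) * m) (hy : gy ≤ b + (y - p) * m) :
    ((y - t) * gx + (t - x) * gy) / (y - x) ≤ b + (t - p) * m := by
  rw [div_le_iff₀ (sub_pos.2 hxy)]
  nlinarith [mul_le_mul_of_nonneg_left hx (sub_nonneg.2 hty),
    mul_le_mul_of_nonneg_left hy (sub_nonneg.2 hxt)]

theorem exists_le_and_le_succ {β : Type*} [LinearOrder β] (a : ℕ → β) {x : β} (m : ℕ)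
    (h0 : a 0 ≤ x) (hm : x ≤ a (m + 1)) : ∃ n ≤ m, a n ≤ x ∧ x ≤ a (n + 1) := by
  induction m with
  | zero => exact ⟨0, le_rfl, h0, hm⟩
  | succ m ih =>
    rcases le_or_gt x (a (m + 1)) with hle | hlt
    · obtain ⟨n, hn, hxn⟩ := ih hle
      exact ⟨n, hn.trans m.le_succ, hxn⟩
    · exact ⟨m + 1, le_rfl, hlt.le, hm⟩

theorem optimistic_construction_dominated_general {k : ℕ} (hk : 2 ≤ k)
    (a : ℕ → ℝ) (ha0 : a 0 = 0) (hamono : ∀ i, i < k - 1 → a i < a (i + 1))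
    (istar : ℕ)
    (h h' : ℝ → ℝ)
    (hconv : ConvexOn ℝ (Set.Ici (0 : ℝ)) h)
    (hderiv : ∀ x ∈ Set.Ici (0 : ℝ), HasDerivWithinAt h (h' x) (Set.Ici 0) x)
    (hh0 : h 0 = 1)
    (hlb : ∀ α : ℝ, 0 ≤ α → max (1 - α) 0 ≤ h α)
    (g : ℝ → ℝ)
    (hgaffine : ∀ i, i ≤ k - 2 → ∀ α : ℝ, a i ≤ α → α ≤ a (i + 1) →
      g α = ((a (i + 1) - α) * g (a i) + (α - a i) * g (a (i + 1))) / (a (i + 1) - a i))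
    (hg0 : g (a 0) ≤ 1)
    (hgfwd : ∀ i, 1 ≤ i → i ≤ istar →
      g (a i) ≤ h (a (i - 1)) + (a i - a (i - 1)) * h' (a (i - 1)))
    (hgbwd : ∀ i, istar ≤ i → i ≤ k - 2 →
      g (a i) ≤ h (a (i + 1)) - (a (i + 1) - a i) * h' (a (i + 1)))
    (hglast : g (a (k - 1)) ≤ 0) :
    ∀ α : ℝ, 0 ≤ α → α ≤ a (k - 1) → g α ≤ h α := by
  have ha_nonneg : ∀ i ≤ k - 1, 0 ≤ a i := fun i hi ↦ ha0 ▸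
    (strictMonoOn_Iic_of_lt_succ (n := k - 1) fun m hm ↦ hamono m hm).monotoneOn
      (Set.mem_Iic.2 (Nat.zero_le _)) (Set.mem_Iic.2 hi) (Nat.zero_le i)
  have tangent_le : ∀ i ≤ k - 1, ∀ y, 0 ≤ y → h (a i) + (y - a i) * h' (a i) ≤ h y :=
    fun i hi y hy ↦ hconv.add_sub_mul_le_of_hasDerivWithinAt (ha_nonneg i hi) hy
      (hderiv _ (ha_nonneg i hi))
  have hgrid : ∀ i ≤ k - 1, g (a i) ≤ h (a i) := by
    intro i hi
    rcases Nat.eq_zero_or_pos i with rfl | hpos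
    · simpa [ha0, hh0] using hg0
    rcases le_or_gt i istar with hfwd | hbwd
    · linarith [hgfwd i hpos hfwd, tangent_le (i - 1) (by omega) (a i) (ha_nonneg i hi)]
    rcases lt_or_eq_of_le hi with hlt | rfl
    · linarith [hgbwd i hbwd.le (by omega), tangent_le (i + 1) (by omega) (a i) (ha_nonneg i hi)]
    · linarith [le_max_right (1 - a (k - 1)) 0, hlb _ (ha_nonneg _ hi)]
  intro x hx0 hxk
  obtain ⟨n, hn, hxn, hxn1⟩ :=
    exists_le_and_le_succ a (k - 2) (ha0 ▸ hx0) (by rwa [show k - 2 + 1 = k - 1 by omega])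
  have hgap := hamono n (by omega)
  rw [hgaffine n hn x hxn hxn1]
  rcases lt_or_ge n istar with hfwd | hbwd
  · refine (chord_le_of_le_line hgap hxn hxn1 (by simpa using hgrid n (by omega)) ?_).trans
      (tangent_le n (by omega) x hx0)
    simpa using hgfwd (n + 1) (by omega) hfwd
  · refine (chord_le_of_le_line hgap hxn hxn1 ?_ (by simpa using hgrid (n + 1) (by omega))).trans
      (tangent_le (n + 1) (by omega) x hx0)
    linarith [hgbwd n hbwd hn]

/-- Correctness (domination) of the optimistic PLD construction: if `g` is piecewise
linear on the grid `0 = a 0 < a 1 < ⋯ < a (k-1)` (with `a i* = 1`) and its grid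
values lie below the forward tangent-line candidates (for grid points up to `i*`),
below the backward tangent-line candidates (for grid points from `i*` on), below `1`
at `a 0`, and below `0` at `a (k-1)`, then `g` lies below the hockey-stick curve `h`
on `[0, a (k-1)]`. -/
theorem optimistic_construction_dominated {k : ℕ} (hk : 2 ≤ k)
    (a : ℕ → ℝ) (ha0 : a 0 = 0) (hamono : ∀ i, i < k - 1 → a i < a (i + 1))
    (istar : ℕ) (histar1 : 1 ≤ istar) (histark : istar ≤ k - 1) (haistar : a istar = 1)
    (h h' : ℝ → ℝ)
    (hconv : ConvexOn ℝ (Set.Ici (0 : ℝ)) h)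
    (hderiv : ∀ x ∈ Set.Ici (0 : ℝ), HasDerivWithinAt h (h' x) (Set.Ici 0) x)
    (hanti : AntitoneOn h (Set.Ici (0 : ℝ)))
    (hh0 : h 0 = 1)
    (hlb : ∀ α : ℝ, 0 ≤ α → max (1 - α) 0 ≤ h α)
    (g : ℝ → ℝ)
    (hgaffine : ∀ i, i ≤ k - 2 → ∀ α : ℝ, a i ≤ α → α ≤ a (i + 1) →
      g α = ((a (i + 1) - α) * g (a i) + (α - a i) * g (a (i + 1))) / (a (i + 1) - a i))
    (hg0 : g (a 0) ≤ 1)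
    (hgfwd : ∀ i, 1 ≤ i → i ≤ istar →
      g (a i) ≤ h (a (i - 1)) + (a i - a (i - 1)) * h' (a (i - 1)))
    (hgbwd : ∀ i, istar ≤ i → i ≤ k - 2 →
      g (a i) ≤ h (a (i + 1)) - (a (i + 1) - a i) * h' (a (i + 1)))
    (hglast : g (a (k - 1)) ≤ 0) :
    ∀ α : ℝ, 0 ≤ α → α ≤ a (k - 1) → g α ≤ h α :=
  optimistic_construction_dominated_general hk a ha0 hamono istar h h' hconv hderiv hh0 hlb g
    hgaffine hg0 hgfwd hgbwd hglast
end
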